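/- arXiv:1601.01998 — 5 statements merged into one kernel-verified Lean document; each statement's English description precedes it below -/
import Mathlib

section
/- Let z be a complex number and β a real number with β > |z|. Then Re(z/(β - z)) ≥ -|z|/(β + |z|). -/
open Complex

lemma Complex.normSq_ofReal_sub (β : ℝ) (z : ℂ) :
    normSq ((β : ℂ) - z) = β ^ 2 - 2 * β * z.re + ‖z‖ ^ 2 := by
  rw [Complex.sq_norm, normSq_apply, normSq_apply]
  simp only [sub_re, sub_im, ofReal_re, ofReal_im]
  ring

lemma Complex.re_div_ofReal_sub (β : ℝ) (z : ℂ) :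
    (z / ((β : ℂ) - z)).re = (β * z.re - ‖z‖ ^ 2) / normSq ((β : ℂ) - z) := by
  rw [div_re, ← add_div, Complex.sq_norm, normSq_apply z]
  simp only [sub_re, sub_im, ofReal_re, ofReal_im]
  ring

/-- Clearing denominators turns the inequality into `0 ≤ β (β - r) (x + r)`. -/
lemma neg_div_add_le_div_of_abs_le {x r β : ℝ} (hx : |x| ≤ r) (hrβ : r < β) :
    -r / (β + r) ≤ (β * x - r ^ 2) / (β ^ 2 - 2 * β * x + r ^ 2) := by
  obtain ⟨hxl, hxu⟩ := abs_le.mp hx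
  have hr : 0 ≤ r := (abs_nonneg x).trans hx
  have hβx : β * x ≤ β * r := mul_le_mul_of_nonneg_left hxu (by linarith)
  have hden : 0 < β ^ 2 - 2 * β * x + r ^ 2 := by nlinarith [sq_pos_of_pos (sub_pos.mpr hrβ)]
  rw [div_le_div_iff₀ (by linarith) hden]
  have key : (β * x - r ^ 2) * (β + r) + r * (β ^ 2 - 2 * β * x + r ^ 2)
      = β * (β - r) * (x + r) := by ring
  have hprod : 0 ≤ β * (β - r) * (x + r) := by
    apply mul_nonneg (mul_nonneg _ _) _ <;> linarith
  linarith

theorem re_div_lower_bound (z : ℂ) (β : ℝ) (h : β > ‖z‖) :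
    (z / ((β : ℂ) - z)).re ≥ -‖z‖ / (β + ‖z‖) := by
  rw [re_div_ofReal_sub, normSq_ofReal_sub]
  exact neg_div_add_le_div_of_abs_le (abs_re_le_norm z) h
end

section
/- Let a > b > 0, λ ∈ [0,1], and z ∈ ℂ with |z| < b. Then λ·Re(z/(a - z)) - Re(z/(b - z)) ≥ λ·|z|/(a - |z|) - |z|/(b - |z|). -/
/-!
Write `h(c) = Re (z / (c - z)) - ‖z‖ / (c - ‖z‖)` for `c > ‖z‖`. Since `‖c - z‖ ≥ c - ‖z‖`,
`Re (z / (c - z)) ≤ ‖z‖ / (c - ‖z‖)`, so `h ≤ 0`; and the same estimate applied to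
`h'(c) = ‖z‖ / (c - ‖z‖)² - Re (z / (c - z)²)` shows that `h` is nondecreasing.
Hence `h(b) ≤ h(a) ≤ λ h(a)`, which is the claim.
-/

open Set

noncomputable def divSubDefect (z : ℂ) (c : ℝ) : ℝ :=
  (z / ((c : ℂ) - z)).re - ‖z‖ / (c - ‖z‖)

lemma sub_norm_le_norm_ofReal_sub (z : ℂ) {c : ℝ} (hc : 0 ≤ c) : c - ‖z‖ ≤ ‖(c : ℂ) - z‖ := by
  simpa only [Complex.norm_real, Real.norm_of_nonneg hc] using norm_sub_norm_le (c : ℂ) z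

lemma norm_div_ofReal_sub_pow_le (z : ℂ) {c : ℝ} (hc : ‖z‖ < c) (n : ℕ) :
    ‖z / ((c : ℂ) - z) ^ n‖ ≤ ‖z‖ / (c - ‖z‖) ^ n := by
  have hgap := sub_norm_le_norm_ofReal_sub z ((norm_nonneg z).trans hc.le)
  rw [norm_div, norm_pow]
  gcongr

lemma divSubDefect_nonpos (z : ℂ) {c : ℝ} (hc : ‖z‖ < c) : divSubDefect z c ≤ 0 := by
  have h := norm_div_ofReal_sub_pow_le z hc 1
  simp only [pow_one] at h
  exact sub_nonpos.mpr ((Complex.re_le_norm _).trans h)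

lemma hasDerivAt_divSubDefect (z : ℂ) {c : ℝ} (hc : ‖z‖ < c) :
    HasDerivAt (divSubDefect z) (‖z‖ / (c - ‖z‖) ^ 2 - (z / ((c : ℂ) - z) ^ 2).re) c := by
  have hcz : (c : ℂ) - z ≠ 0 := norm_pos_iff.mp <|
    (sub_pos.mpr hc).trans_le (sub_norm_le_norm_ofReal_sub z ((norm_nonneg z).trans hc.le))
  have hcr : c - ‖z‖ ≠ 0 := by linarith
  have hre : HasDerivAt (fun t : ℝ => (z / ((t : ℂ) - z)).re) (-(z / ((c : ℂ) - z) ^ 2)).re c :=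
    HasDerivAt.real_of_complex (e := fun w => z / (w - z)) <|
      ((hasDerivAt_const (c : ℂ) z).fun_div ((hasDerivAt_id _).sub_const z) hcz).congr_deriv
        (by simp only [id]; ring)
  have hreal : HasDerivAt (fun t : ℝ => ‖z‖ / (t - ‖z‖)) (-(‖z‖ / (c - ‖z‖) ^ 2)) c :=
    ((hasDerivAt_const c ‖z‖).fun_div ((hasDerivAt_id c).sub_const ‖z‖) hcr).congr_deriv
      (by simp only [id]; ring)
  refine (hre.sub hreal).congr_deriv ?_
  rw [Complex.neg_re]
  ring

lemma divSubDefect_monotoneOn (z : ℂ) : MonotoneOn (divSubDefect z) (Ioi ‖z‖) := by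
  refine monotoneOn_of_hasDerivWithinAt_nonneg
    (f' := fun c => ‖z‖ / (c - ‖z‖) ^ 2 - (z / ((c : ℂ) - z) ^ 2).re) (convex_Ioi _)
    (fun c hc => (hasDerivAt_divSubDefect z hc).continuousAt.continuousWithinAt)
    (fun c hc => ?_) (fun c hc => ?_) <;> rw [interior_Ioi] at hc
  · exact (hasDerivAt_divSubDefect z hc).hasDerivWithinAt
  · exact sub_nonneg.mpr ((Complex.re_le_norm _).trans (norm_div_ofReal_sub_pow_le z hc 2))

theorem re_div_combination_bound_general (a b lam : ℝ) (z : ℂ)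
    (hab : b < a) (hlam1 : lam ≤ 1)
    (hz : ‖z‖ < b) :
    lam * (z / ((a : ℂ) - z)).re - (z / ((b : ℂ) - z)).re ≥
      lam * ‖z‖ / (a - ‖z‖) -
        ‖z‖ / (b - ‖z‖) := by
  have hza : ‖z‖ < a := hz.trans hab
  have hmono : divSubDefect z b ≤ divSubDefect z a :=
    divSubDefect_monotoneOn z hz hza hab.le
  have hscale : divSubDefect z a ≤ lam * divSubDefect z a :=
    le_mul_of_le_one_left (divSubDefect_nonpos z hza) hlam1
  simp only [divSubDefect] at hmono hscale
  rw [ge_iff_le, mul_div_assoc]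
  linarith

theorem re_div_combination_bound (a b lam : ℝ) (z : ℂ)
    (hb : 0 < b) (hab : b < a) (hlam0 : 0 ≤ lam) (hlam1 : lam ≤ 1)
    (hz : ‖z‖ < b) :
    lam * (z / ((a : ℂ) - z)).re - (z / ((b : ℂ) - z)).re ≥
      lam * ‖z‖ / (a - ‖z‖) -
        ‖z‖ / (b - ‖z‖) :=
  re_div_combination_bound_general a b lam z hab hlam1 hz
end

section
/- Let p(x) = (1 - x/x₁)⋯(1 - x/xₙ) with 0 < x₁ ≤ ⋯ ≤ xₙ and p(0)=1, and let C < 0. Then the polynomial q(x) = C·p(x) - x·p'(x) has a real zero in the open interval (0, x₁). -/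
/-!
On `[0, x₁)` every factor `1 - x / xᵢ` of `p` is positive, and
`q = C p + ∑ⱼ (x / xⱼ) ∏_{i ≠ j} (1 - x / xᵢ)`. Keeping only the term `j = 1` of the sum gives
`q(t x₁) ≥ (C (1 - t) + t) ∏_{i ≠ 1} (1 - t x₁ / xᵢ)`, which is positive once `t < 1` is close
enough to `1`. Since `q(0) = C < 0`, the intermediate value theorem gives a zero in `(0, t x₁)`.
-/

open Polynomial Finset

section ProdOneSub

variable {ι : Type*} [DecidableEq ι]

theorem eval_X_mul_derivative_prod_one_sub_C_mul_X {R : Type*} [CommRing R] (s : Finset ι)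
    (a : ι → R) (y : R) :
    eval y (X * derivative (∏ i ∈ s, (1 - C (a i) * X))) =
      -∑ j ∈ s, a j * y * ∏ i ∈ s.erase j, (1 - a i * y) := by
  simp only [derivative_prod_finset, derivative_sub, derivative_one, derivative_C_mul_X,
    eval_mul, eval_X, eval_finsetSum, eval_prod, eval_sub, eval_one, eval_zero, eval_C, mul_sum,
    ← sum_neg_distrib]
  refine sum_congr rfl fun j _ => ?_
  ring

theorem eval_C_mul_prod_one_sub_sub_X_mul_derivative_pos {K : Type*} [Field K] [LinearOrder K]
    [IsStrictOrderedRing K] (s : Finset ι) (a : ι → K) (c y : K) {j₀ : ι} (hj₀ : j₀ ∈ s)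
    (hay : ∀ i ∈ s, a i * y ∈ Set.Ico 0 1)
    (hc : 0 < c * (1 - a j₀ * y) + a j₀ * y) :
    0 < eval y
      (C c * ∏ i ∈ s, (1 - C (a i) * X) - X * derivative (∏ i ∈ s, (1 - C (a i) * X))) := by
  have hfactor_pos : ∀ t ⊆ s, 0 < ∏ i ∈ t, (1 - a i * y) := fun t ht =>
    prod_pos fun i hi => sub_pos.2 (hay i (ht hi)).2
  have hterm_le : a j₀ * y * ∏ i ∈ s.erase j₀, (1 - a i * y) ≤
      ∑ j ∈ s, a j * y * ∏ i ∈ s.erase j, (1 - a i * y) :=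
    single_le_sum (f := fun j => a j * y * ∏ i ∈ s.erase j, (1 - a i * y))
      (fun j hj => mul_nonneg (hay j hj).1 (hfactor_pos _ (erase_subset j s)).le) hj₀
  have hlead_pos := mul_pos hc (hfactor_pos _ (erase_subset j₀ s))
  rw [eval_sub, eval_X_mul_derivative_prod_one_sub_C_mul_X, eval_mul, eval_C, eval_prod,
    ← mul_prod_erase s _ hj₀]
  simp only [eval_sub, eval_one, eval_mul, eval_C, eval_X]
  nlinarith

end ProdOneSub

theorem hyperbolic_Cp_minus_xp'_smallest_zero (n : ℕ) (hn : 0 < n) (x : Fin n → ℝ)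
    (hx : ∀ i, 0 < x i) (hmono : Monotone x) (C : ℝ) (hC : C < 0) :
    ∃ r ∈ Set.Ioo (0 : ℝ) (x ⟨0, hn⟩),
      Polynomial.eval r
        (Polynomial.C C * (∏ i : Fin n, (1 - Polynomial.C (x i)⁻¹ * Polynomial.X)) -
          Polynomial.X *
            Polynomial.derivative (∏ i : Fin n, (1 - Polynomial.C (x i)⁻¹ * Polynomial.X))) = 0 := by
  set x₁ := x ⟨0, hn⟩
  have hx₁ : 0 < x₁ := hx _
  obtain ⟨t, ht_gt, ht_lt⟩ : ∃ t, -C / (1 - C) < t ∧ t < 1 :=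
    exists_between ((div_lt_one (by linarith)).2 (by linarith))
  have ht_pos : 0 < t := lt_trans (div_pos (by linarith) (by linarith)) ht_gt
  have hy : t * x₁ < x₁ := by nlinarith
  have hfactor : ∀ i ∈ univ, (x i)⁻¹ * (t * x₁) ∈ Set.Ico 0 1 := fun i _ => by
    have hx₁_le : x₁ ≤ x i := hmono (Nat.zero_le _)
    refine ⟨by have := hx i; positivity, ?_⟩
    rw [inv_mul_lt_one₀ (hx i)]
    linarith
  have hlead : 0 < C * (1 - x₁⁻¹ * (t * x₁)) + x₁⁻¹ * (t * x₁) := by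
    rw [div_lt_iff₀ (by linarith)] at ht_gt
    rw [show x₁⁻¹ * (t * x₁) = t by field_simp]
    linarith
  have hq_pos := eval_C_mul_prod_one_sub_sub_X_mul_derivative_pos univ (fun i => (x i)⁻¹) C
    (t * x₁) (mem_univ _) hfactor hlead
  obtain ⟨r, hr, hr_root⟩ := intermediate_value_Ioo (mul_pos ht_pos hx₁).le
    (Polynomial.continuous _).continuousOn ⟨by simpa [eval_prod] using hC, hq_pos⟩
  exact ⟨r, ⟨hr.1, hr.2.trans hy⟩, hr_root⟩
end

section
/- Let f(x) = Σ_{n≥0} aₙ xⁿ and g(x) = Σ_{n≥0} bₙ xⁿ be power series with aₙ ∈ ℝ and bₙ > 0 for all n, both convergent on (-r, r) for some r > 0. If the sequence (aₙ/bₙ) is strictly increasing, then the function x ↦ f(x)/g(x) is strictly increasing on (0, r). -/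
private lemma hasSum_mul_aux (u v : ℕ → ℝ) (s t : ℝ) (hu : HasSum u s) (hv : HasSum v t) :
    HasSum (fun p : ℕ × ℕ => u p.1 * v p.2) (s * t) :=
  hu.mul hv (summable_mul_of_summable_norm (summable_norm_iff.mpr hu.summable)
    (summable_norm_iff.mpr hv.summable))


theorem quotient_of_power_series_strictMono (a b : ℕ → ℝ) (r : ℝ) (hr : 0 < r)
    (f g : ℝ → ℝ)
    (hb : ∀ n, 0 < b n)
    (hf : ∀ x : ℝ, x ∈ Set.Ioo (-r) r → HasSum (fun n => a n * x ^ n) (f x))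
    (hg : ∀ x : ℝ, x ∈ Set.Ioo (-r) r → HasSum (fun n => b n * x ^ n) (g x))
    (hmono : StrictMono (fun n => a n / b n)) :
    StrictMonoOn (fun x => f x / g x) (Set.Ioo 0 r) := by
  intro x hx y hy hxy
  obtain ⟨hx0, hxr⟩ := hx
  obtain ⟨hy0, hyr⟩ := hy
  have hxI : x ∈ Set.Ioo (-r) r := ⟨by linarith, hxr⟩
  have hyI : y ∈ Set.Ioo (-r) r := ⟨by linarith, hyr⟩
  have hfx := hf x hxI
  have hfy := hf y hyI
  have hgx := hg x hxI
  have hgy := hg y hyI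
  have hgxpos : 0 < g x := by
    have h0 : (0:ℝ) < b 0 * x ^ 0 := by simpa using hb 0
    exact lt_of_lt_of_le h0
      (le_hasSum hgx 0 (fun n _ => le_of_lt (mul_pos (hb n) (pow_pos hx0 n))))
  have hgypos : 0 < g y := by
    have h0 : (0:ℝ) < b 0 * y ^ 0 := by simpa using hb 0
    exact lt_of_lt_of_le h0
      (le_hasSum hgy 0 (fun n _ => le_of_lt (mul_pos (hb n) (pow_pos hy0 n))))
  -- key sign lemma
  have key : ∀ m n : ℕ, m < n →
      0 < (a m * b n - a n * b m) * (y ^ m * x ^ n - x ^ m * y ^ n) := by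
    intro m n hmn
    have neg1 : a m * b n - a n * b m < 0 := by
      have h := hmono hmn
      have := (div_lt_div_iff₀ (hb m) (hb n)).mp h
      linarith
    have neg2 : y ^ m * x ^ n - x ^ m * y ^ n < 0 := by
      have hpow : x ^ (n - m) < y ^ (n - m) :=
        pow_lt_pow_left₀ hxy hx0.le (Nat.sub_ne_zero_of_lt hmn)
      have hxn : x ^ n = x ^ m * x ^ (n - m) := by
        rw [← pow_add]; congr 1; omega
      have hyn : y ^ n = y ^ m * y ^ (n - m) := by
        rw [← pow_add]; congr 1; omega
      have h1 : y ^ m * x ^ n = (x ^ m * y ^ m) * x ^ (n - m) := by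
        rw [hxn]; ring
      have h2 : x ^ m * y ^ n = (x ^ m * y ^ m) * y ^ (n - m) := by
        rw [hyn]; ring
      have hpos : 0 < x ^ m * y ^ m := mul_pos (pow_pos hx0 m) (pow_pos hy0 m)
      rw [h1, h2]
      have := mul_lt_mul_of_pos_left hpow hpos
      linarith
    exact mul_pos_of_neg_of_neg neg1 neg2
  -- product sums
  have hA : HasSum (fun p : ℕ × ℕ => (a p.1 * y ^ p.1) * (b p.2 * x ^ p.2))
      (f y * g x) := hasSum_mul_aux (fun n => a n * y ^ n) (fun n => b n * x ^ n) (f y) (g x) hfy hgx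
  have hB : HasSum (fun p : ℕ × ℕ => (a p.1 * x ^ p.1) * (b p.2 * y ^ p.2))
      (f x * g y) := hasSum_mul_aux (fun n => a n * x ^ n) (fun n => b n * y ^ n) (f x) (g y) hfx hgy
  set F : ℕ × ℕ → ℝ := fun p =>
    (a p.1 * y ^ p.1) * (b p.2 * x ^ p.2) - (a p.1 * x ^ p.1) * (b p.2 * y ^ p.2)
    with hF
  set S : ℝ := f y * g x - f x * g y with hSdef
  have hS : HasSum F S := hA.sub hB
  have hS2 : HasSum (fun p : ℕ × ℕ => F (p.2, p.1)) S :=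
    (Equiv.prodComm ℕ ℕ).hasSum_iff.mpr hS
  have ht : HasSum (fun p : ℕ × ℕ => F p + F (p.2, p.1)) (S + S) := hS.add hS2
  have hteq : ∀ p : ℕ × ℕ, F p + F (p.2, p.1) =
      (a p.1 * b p.2 - a p.2 * b p.1) * (y ^ p.1 * x ^ p.2 - x ^ p.1 * y ^ p.2) := by
    intro p; simp only [hF]; ring
  have htnonneg : ∀ p : ℕ × ℕ, 0 ≤ F p + F (p.2, p.1) := by
    intro ⟨m, n⟩
    rw [hteq]
    rcases lt_trichotomy m n with h | h | h
    · exact (key m n h).le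
    · subst h; simp
    · have h2 := key n m h
      have heq : (a m * b n - a n * b m) * (y ^ m * x ^ n - x ^ m * y ^ n)
          = (a n * b m - a m * b n) * (y ^ n * x ^ m - x ^ n * y ^ m) := by ring
      rw [heq]; exact h2.le
  have htpos : 0 < F (0, 1) + F ((0, 1) : ℕ × ℕ).swap := by
    have h01 := key 0 1 one_pos
    have : F (0, 1) + F (1, 0) =
        (a 0 * b 1 - a 1 * b 0) * (y ^ 0 * x ^ 1 - x ^ 0 * y ^ 1) := hteq (0, 1)
    simp only [Prod.swap]
    rw [this]
    exact h01
  have hSpos : 0 < S := by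
    have hsum_pos : 0 < S + S := by
      rw [← ht.tsum_eq]
      exact Summable.tsum_pos ht.summable htnonneg (0, 1) (by simpa using htpos)
    linarith
  simp only
  rw [div_lt_div_iff₀ hgxpos hgypos]
  rw [hSdef] at hSpos
  linarith
end

section
/- For ν > -1, the Jensen polynomial of the entire function z ↦ Σ_{k≥0} (-1)^k z^k / (k! Γ(ν+k+1) Γ(ν+2k+2)) of degree n equals ((ν+1)/Γ(ν+2)²) · ₁F₃(-n; ν+1, (ν+2)/2, (ν+3)/2; z/4), i.e., Σ_{k=0}^n C(n,k) (-1)^k z^k / (Γ(ν+k+1) Γ(ν+2k+2)) = ((ν+1)/Γ(ν+2)²) Σ_{k=0}^n (-n)_k / ((ν+1)_k ((ν+2)/2)_k ((ν+3)/2)_k) · (z/4)^k / k!. -/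
private lemma gammaAsc (x : ℝ) (hx : 0 < x) (k : ℕ) :
    Real.Gamma (x + k) = (ascPochhammer ℝ k).eval x * Real.Gamma x := by
  induction k with
  | zero => simp
  | succ k ih =>
    have h1 : (x + ((k + 1 : ℕ) : ℝ)) = (x + k) + 1 := by push_cast; ring
    have h2 : (x + k : ℝ) ≠ 0 := by positivity
    rw [h1, Real.Gamma_add_one h2, ih, ascPochhammer_succ_eval]
    ring

private lemma gammaAsc2 (x : ℝ) (hx : 0 < x) (k : ℕ) :
    Real.Gamma (x + 2 * k) =
      (ascPochhammer ℝ k).eval (x / 2) * (ascPochhammer ℝ k).eval ((x + 1) / 2) * 4 ^ k *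
        Real.Gamma x := by
  induction k with
  | zero => simp
  | succ k ih =>
    have h1 : (x + 2 * ((k + 1 : ℕ) : ℝ)) = ((x + 2 * k + 1) + 1) := by push_cast; ring
    have h2 : (x + 2 * k : ℝ) ≠ 0 := by positivity
    have h3 : (x + 2 * k + 1 : ℝ) ≠ 0 := by positivity
    rw [h1, Real.Gamma_add_one h3, show (x + 2 * k + 1 : ℝ) = (x + 2 * k) + 1 from rfl,
      Real.Gamma_add_one h2, ih, ascPochhammer_succ_eval, ascPochhammer_succ_eval]
    ring

theorem jensen_polynomial_hypergeometric_cross (ν : ℝ) (hν : ν > -1) (n : ℕ) (z : ℝ) :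
    ∑ k ∈ Finset.range (n + 1),
        (n.choose k : ℝ) * (-1) ^ k * z ^ k /
          (Real.Gamma (ν + k + 1) * Real.Gamma (ν + 2 * k + 2)) =
      (ν + 1) / (Real.Gamma (ν + 2)) ^ 2 *
        ∑ k ∈ Finset.range (n + 1),
          (ascPochhammer ℝ k).eval (-(n : ℝ)) /
              ((ascPochhammer ℝ k).eval (ν + 1) * (ascPochhammer ℝ k).eval ((ν + 2) / 2) *
                (ascPochhammer ℝ k).eval ((ν + 3) / 2)) *
            ((z / 4) ^ k / (Nat.factorial k : ℝ)) := by
  have h1 : (0 : ℝ) < ν + 1 := by linarith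
  have h2 : (0 : ℝ) < ν + 2 := by linarith
  rw [Finset.mul_sum]
  refine Finset.sum_congr rfl fun k hk => ?_
  have hkn : k ≤ n := Nat.lt_succ_iff.mp (Finset.mem_range.mp hk)
  -- pochhammer at -n
  have hneg : (ascPochhammer ℝ k).eval (-(n : ℝ)) =
      (-1) ^ k * ((Nat.factorial k : ℝ) * (n.choose k : ℝ)) := by
    rw [ascPochhammer_eval_neg_eq_descPochhammer, descPochhammer_eval_eq_descFactorial,
      Nat.descFactorial_eq_factorial_mul_choose]
    push_cast; ring
  have hg1 : Real.Gamma (ν + k + 1) = (ascPochhammer ℝ k).eval (ν + 1) * Real.Gamma (ν + 1) := by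
    have := gammaAsc (ν + 1) h1 k
    rw [show (ν + 1 + k : ℝ) = ν + k + 1 by ring] at this
    exact this
  have hg2 : Real.Gamma (ν + 2 * k + 2) =
      (ascPochhammer ℝ k).eval ((ν + 2) / 2) * (ascPochhammer ℝ k).eval ((ν + 3) / 2) * 4 ^ k *
        Real.Gamma (ν + 2) := by
    have := gammaAsc2 (ν + 2) h2 k
    rw [show (ν + 2 + 2 * k : ℝ) = ν + 2 * k + 2 by ring,
      show (ν + 2 + 1) / 2 = (ν + 3) / 2 by ring] at this
    exact this
  have hg12 : Real.Gamma (ν + 2) = (ν + 1) * Real.Gamma (ν + 1) := by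
    have := Real.Gamma_add_one (s := ν + 1) (by positivity)
    rw [show (ν + 1 + 1 : ℝ) = ν + 2 by ring] at this
    exact this
  have hp1 : 0 < (ascPochhammer ℝ k).eval (ν + 1) := ascPochhammer_pos k _ h1
  have hp2 : 0 < (ascPochhammer ℝ k).eval ((ν + 2) / 2) := ascPochhammer_pos k _ (by linarith)
  have hp3 : 0 < (ascPochhammer ℝ k).eval ((ν + 3) / 2) := ascPochhammer_pos k _ (by linarith)
  have hgp1 : 0 < Real.Gamma (ν + 1) := Real.Gamma_pos_of_pos h1
  have hfk : (0 : ℝ) < (Nat.factorial k : ℝ) := by positivity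
  rw [hneg, hg1, hg2, hg12, div_pow]
  field_simp
end
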